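/- Let A be a bounded linear operator on H, let p ≥ 1 be a real exponent, and let S : [0,∞) × [0,∞) → [0,∞) be continuous and monotone increasing in each argument. Set c̃(A) = inf_{λ,μ∈Ω} |⟨A κ(λ), κ(μ)⟩|. Then max{ S(c̃(A)^p, ‖A‖_ber^p), S(‖A‖_ber^p, c̃(A)^p) } ≤ N_{S,p}(A). -/

import Mathlib

noncomputable section
open ContinuousLinearMap

variable {H : Type*} [NormedAddCommGroup H] [InnerProductSpace ℂ H] [CompleteSpace H]
variable {Ω : Type*}

/-- The Berezin radius `ber(A) = sup_{λ∈Ω} |⟨A κ(λ), κ(λ)⟩|`. -/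
def ber (κ : Ω → H) (A : H →L[ℂ] H) : ℝ :=
  ⨆ l : Ω, ‖(inner ℂ (A (κ l)) (κ l) : ℂ)‖

/-- The Berezin norm `‖A‖_ber = sup_{λ,μ∈Ω} |⟨A κ(λ), κ(μ)⟩|`. -/
def berNorm (κ : Ω → H) (A : H →L[ℂ] H) : ℝ :=
  ⨆ q : Ω × Ω, ‖(inner ℂ (A (κ q.1)) (κ q.2) : ℂ)‖

/-- `N_{S,p}(A) = sup_{λ,μ∈Ω} S(|⟨A κ(λ), κ(μ)⟩|^p, |⟨A* κ(λ), κ(μ)⟩|^p)`. -/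
def NS (S : ℝ → ℝ → ℝ) (p : ℝ) (κ : Ω → H) (A : H →L[ℂ] H) : ℝ :=
  ⨆ q : Ω × Ω, S (‖(inner ℂ (A (κ q.1)) (κ q.2) : ℂ)‖ ^ p)
    (‖(inner ℂ ((adjoint A) (κ q.1)) (κ q.2) : ℂ)‖ ^ p)

/-- `|X| = (X*X)^{1/2}` via continuous functional calculus. -/
def absOp (X : H →L[ℂ] H) : H →L[ℂ] H := cfc Real.sqrt (adjoint X * X)

/-- `h(|X|)^r` : continuous functional calculus of `|X|` applied to `s ↦ h(s)^r`. -/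
def opApply (h : ℝ → ℝ) (r : ℝ) (X : H →L[ℂ] H) : H →L[ℂ] H :=
  cfc (fun s : ℝ => h s ^ r) (absOp X)

theorem stmt0 [Nonempty Ω] (κ : Ω → H) (hκ : ∀ l, ‖κ l‖ = 1)
    (A : H →L[ℂ] H) (p : ℝ) (hp : 1 ≤ p)
    (S : ℝ → ℝ → ℝ)
    (hS_nonneg : ∀ a b : ℝ, 0 ≤ a → 0 ≤ b → 0 ≤ S a b)
    (hS_cont : ContinuousOn (fun q : ℝ × ℝ => S q.1 q.2) (Set.Ici 0 ×ˢ Set.Ici 0))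
    (hS_mono₁ : ∀ b ∈ Set.Ici (0 : ℝ), MonotoneOn (fun a => S a b) (Set.Ici 0))
    (hS_mono₂ : ∀ a ∈ Set.Ici (0 : ℝ), MonotoneOn (fun b => S a b) (Set.Ici 0)) :
    max (S ((⨅ q : Ω × Ω, ‖(inner ℂ (A (κ q.1)) (κ q.2) : ℂ)‖) ^ p) (berNorm κ A ^ p))
        (S (berNorm κ A ^ p) ((⨅ q : Ω × Ω, ‖(inner ℂ (A (κ q.1)) (κ q.2) : ℂ)‖) ^ p))
      ≤ NS S p κ A := by
  classical
  have hp0 : (0:ℝ) ≤ p := le_trans zero_le_one hp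
  set f : Ω × Ω → ℝ := fun q => ‖(inner ℂ (A (κ q.1)) (κ q.2) : ℂ)‖ with hfdef
  have hf0 : ∀ q, 0 ≤ f q := fun q => norm_nonneg _
  have hfM : ∀ q, f q ≤ ‖A‖ := by
    intro q
    calc f q ≤ ‖A (κ q.1)‖ * ‖κ q.2‖ := norm_inner_le_norm _ _
      _ ≤ (‖A‖ * ‖κ q.1‖) * ‖κ q.2‖ := by
          gcongr
          exact A.le_opNorm _
      _ = ‖A‖ := by rw [hκ, hκ]; ring
  have hbdd : BddAbove (Set.range f) := ⟨‖A‖, by rintro x ⟨q, rfl⟩; exact hfM q⟩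
  have hbddb : BddBelow (Set.range f) := ⟨0, by rintro x ⟨q, rfl⟩; exact hf0 q⟩
  set c : ℝ := ⨅ q, f q with hcdef
  set b : ℝ := ⨆ q, f q with hbdef
  have hc0 : 0 ≤ c := le_ciInf hf0
  have hcle : ∀ q, c ≤ f q := fun q => ciInf_le hbddb q
  have hleb : ∀ q, f q ≤ b := fun q => le_ciSup hbdd q
  obtain ⟨q0⟩ : Nonempty (Ω × Ω) := inferInstance
  have hb0 : 0 ≤ b := le_trans (hf0 q0) (hleb q0)
  have hbM : b ≤ ‖A‖ := ciSup_le hfM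
  have hcM : c ≤ ‖A‖ := le_trans (hcle q0) (hfM q0)
  have hberNorm : berNorm κ A = b := rfl
  have hadj : ∀ q : Ω × Ω, ‖(inner ℂ ((adjoint A) (κ q.1)) (κ q.2) : ℂ)‖ = f (q.2, q.1) := by
    intro q
    simp only [hfdef]
    rw [ContinuousLinearMap.adjoint_inner_left]
    exact norm_inner_symm _ _
  set T : Ω × Ω → ℝ := fun q => S (f q ^ p) (f (q.2, q.1) ^ p) with hTdef
  have hNSeq : NS S p κ A = ⨆ q, T q := by
    unfold NS
    congr 1
    funext q
    rw [hadj q]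
  have hrp : ∀ x y : ℝ, 0 ≤ x → x ≤ y → x ^ p ≤ y ^ p := fun x y hx hxy =>
    Real.rpow_le_rpow hx hxy hp0
  have hfp0 : ∀ q, 0 ≤ f q ^ p := fun q => Real.rpow_nonneg (hf0 q) p
  have hfpM : ∀ q, f q ^ p ≤ ‖A‖ ^ p := fun q => hrp _ _ (hf0 q) (hfM q)
  -- compactness bound on S
  set K : Set (ℝ × ℝ) := Set.Icc (0:ℝ) (‖A‖ ^ p) ×ˢ Set.Icc (0:ℝ) (‖A‖ ^ p) with hKdef
  have hAp0 : (0:ℝ) ≤ ‖A‖ ^ p := Real.rpow_nonneg (norm_nonneg A) p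
  have hKc : IsCompact K := isCompact_Icc.prod isCompact_Icc
  have hKne : K.Nonempty := ⟨(0, 0), by constructor <;> exact ⟨le_rfl, hAp0⟩⟩
  have hKsub : K ⊆ Set.Ici 0 ×ˢ Set.Ici 0 := by
    rintro ⟨x, y⟩ ⟨hx, hy⟩
    exact ⟨hx.1, hy.1⟩
  obtain ⟨z, hzK, hz⟩ := hKc.exists_isMaxOn hKne (hS_cont.mono hKsub)
  set C : ℝ := S z.1 z.2 with hCdef
  have hTC : ∀ q, T q ≤ C := by
    intro q
    have := hz (⟨⟨hfp0 q, hfpM q⟩, ⟨hfp0 (q.2,q.1), hfpM (q.2,q.1)⟩⟩ : (f q ^ p, f (q.2, q.1) ^ p) ∈ K)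
    simpa using this
  have hTbdd : BddAbove (Set.range T) := ⟨C, by rintro x ⟨q, rfl⟩; exact hTC q⟩
  have hTle : ∀ q, T q ≤ ⨆ q, T q := fun q => le_ciSup hTbdd q
  have hcp0 : (0:ℝ) ≤ c ^ p := Real.rpow_nonneg hc0 p
  have hbp0 : (0:ℝ) ≤ b ^ p := Real.rpow_nonneg hb0 p
  -- continuity of x ↦ x ^ p at b
  have hrpc : ContinuousAt (fun x : ℝ => x ^ p) b :=
    Real.continuousAt_rpow_const b p (Or.inr hp0)
  -- Claim 1 : S (c^p) (b^p) ≤ ⨆ T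
  have claim1 : S (c ^ p) (b ^ p) ≤ ⨆ q, T q := by
    have hpt : ∀ q, S (c ^ p) (f q ^ p) ≤ ⨆ q, T q := by
      intro q
      have hmono := hS_mono₁ (f q ^ p) (hfp0 q) hcp0 (hfp0 (q.2, q.1)) (hrp _ _ hc0 (hcle (q.2, q.1)))
      calc S (c ^ p) (f q ^ p) ≤ S (f (q.2, q.1) ^ p) (f q ^ p) := hmono
        _ = T (q.2, q.1) := rfl
        _ ≤ ⨆ q, T q := hTle _
    set φ : ℝ → ℝ := fun x => S (c ^ p) (x ^ p) with hφdef
    have hφc : ContinuousWithinAt φ (Set.Ici 0) b := by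
      have hg : ContinuousWithinAt (fun x : ℝ => ((c ^ p, x ^ p) : ℝ × ℝ)) (Set.Ici 0) b :=
        (continuousWithinAt_const.prodMk hrpc.continuousWithinAt)
      have hmem : ((c ^ p, b ^ p) : ℝ × ℝ) ∈ Set.Ici (0:ℝ) ×ˢ Set.Ici (0:ℝ) := ⟨hcp0, hbp0⟩
      have hmaps : Set.MapsTo (fun x : ℝ => ((c ^ p, x ^ p) : ℝ × ℝ)) (Set.Ici 0)
          (Set.Ici (0:ℝ) ×ˢ Set.Ici (0:ℝ)) := fun x hx => ⟨hcp0, Real.rpow_nonneg hx p⟩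
      have h2 : ContinuousWithinAt ((fun q : ℝ × ℝ => S q.1 q.2) ∘
          (fun x : ℝ => ((c ^ p, x ^ p) : ℝ × ℝ))) (Set.Ici 0) b :=
        ContinuousWithinAt.comp
          (g := fun q : ℝ × ℝ => S q.1 q.2)
          (f := fun x : ℝ => ((c ^ p, x ^ p) : ℝ × ℝ))
          (hS_cont _ hmem) hg hmaps
      exact h2
    refine le_of_forall_pos_le_add ?_
    intro ε hε
    rw [Metric.continuousWithinAt_iff] at hφc
    obtain ⟨δ, hδ, hδ'⟩ := hφc ε hε
    have hlt : b - δ < sSup (Set.range f) := by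
      have hbb : sSup (Set.range f) = b := rfl
      rw [hbb]; linarith
    obtain ⟨x, hxmem, hxq⟩ := exists_lt_of_lt_csSup (Set.range_nonempty f) hlt
    obtain ⟨q, rfl⟩ := hxmem
    have hdist : dist (f q) b < δ := by
      rw [Real.dist_eq, abs_sub_lt_iff]
      constructor <;> [linarith [hleb q]; linarith]
    have := hδ' (hf0 q) hdist
    rw [Real.dist_eq, abs_sub_lt_iff] at this
    have h1 : φ b ≤ φ (f q) + ε := by linarith [this.2]
    calc S (c ^ p) (b ^ p) = φ b := rfl
      _ ≤ φ (f q) + ε := h1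
      _ ≤ (⨆ q, T q) + ε := by linarith [hpt q]
  -- Claim 2 : S (b^p) (c^p) ≤ ⨆ T
  have claim2 : S (b ^ p) (c ^ p) ≤ ⨆ q, T q := by
    have hpt : ∀ q, S (f q ^ p) (c ^ p) ≤ ⨆ q, T q := by
      intro q
      have hmono := hS_mono₂ (f q ^ p) (hfp0 q) hcp0 (hfp0 (q.2, q.1)) (hrp _ _ hc0 (hcle (q.2, q.1)))
      calc S (f q ^ p) (c ^ p) ≤ S (f q ^ p) (f (q.2, q.1) ^ p) := hmono
        _ = T q := rfl
        _ ≤ ⨆ q, T q := hTle _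
    set φ : ℝ → ℝ := fun x => S (x ^ p) (c ^ p) with hφdef
    have hφc : ContinuousWithinAt φ (Set.Ici 0) b := by
      have hg : ContinuousWithinAt (fun x : ℝ => ((x ^ p, c ^ p) : ℝ × ℝ)) (Set.Ici 0) b :=
        (hrpc.continuousWithinAt.prodMk continuousWithinAt_const)
      have hmem : ((b ^ p, c ^ p) : ℝ × ℝ) ∈ Set.Ici (0:ℝ) ×ˢ Set.Ici (0:ℝ) := ⟨hbp0, hcp0⟩
      have hmaps : Set.MapsTo (fun x : ℝ => ((x ^ p, c ^ p) : ℝ × ℝ)) (Set.Ici 0)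
          (Set.Ici (0:ℝ) ×ˢ Set.Ici (0:ℝ)) := fun x hx => ⟨Real.rpow_nonneg hx p, hcp0⟩
      have h2 : ContinuousWithinAt ((fun q : ℝ × ℝ => S q.1 q.2) ∘
          (fun x : ℝ => ((x ^ p, c ^ p) : ℝ × ℝ))) (Set.Ici 0) b :=
        ContinuousWithinAt.comp
          (g := fun q : ℝ × ℝ => S q.1 q.2)
          (f := fun x : ℝ => ((x ^ p, c ^ p) : ℝ × ℝ))
          (hS_cont _ hmem) hg hmaps
      exact h2
    refine le_of_forall_pos_le_add ?_
    intro ε hε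
    rw [Metric.continuousWithinAt_iff] at hφc
    obtain ⟨δ, hδ, hδ'⟩ := hφc ε hε
    have hlt : b - δ < sSup (Set.range f) := by
      have hbb : sSup (Set.range f) = b := rfl
      rw [hbb]; linarith
    obtain ⟨x, hxmem, hxq⟩ := exists_lt_of_lt_csSup (Set.range_nonempty f) hlt
    obtain ⟨q, rfl⟩ := hxmem
    have hdist : dist (f q) b < δ := by
      rw [Real.dist_eq, abs_sub_lt_iff]
      constructor <;> [linarith [hleb q]; linarith]
    have := hδ' (hf0 q) hdist
    rw [Real.dist_eq, abs_sub_lt_iff] at this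
    have h1 : φ b ≤ φ (f q) + ε := by linarith [this.2]
    calc S (b ^ p) (c ^ p) = φ b := rfl
      _ ≤ φ (f q) + ε := h1
      _ ≤ (⨆ q, T q) + ε := by linarith [hpt q]
  rw [hNSeq, hberNorm]
  exact max_le claim1 claim2
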